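/- arXiv:2407.07442 — 2 statements merged into one kernel-verified Lean document; each statement's English description precedes it below -/
import Mathlib

section
/- Let 𝕂 be a field, 𝔐 a linearly ordered Abelian group (written multiplicatively), and X ⊆ 𝕂⟪𝔐⟫ two 𝕂-vector subspaces X and Y of the Hahn field, each closed under segments. Then the product set {f · g : f ∈ X, g ∈ Y} is closed under truncations, in the sense that every truncation (f·g)|𝔪 is a finite sum Σ_{i<n} f_i · g_i with f_i ∈ X and g_i ∈ Y. -/
/-! Fix `f`, `g` and `m`, and for an exponent `b` of `g` let `φ b = {a ∈ supp f | a + b < m}`.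
The map `φ` is antitone, and it takes only finitely many values on `supp g`: along a strictly
increasing sequence `bₙ` with pairwise distinct values, elements `aₙ ∈ φ bₙ \ φ bₙ₊₁` satisfy
`aₙ₊₁ + bₙ₊₁ < m ≤ aₙ + bₙ₊₁`, so they would form a strictly decreasing sequence in the
well-founded set `supp f`. The fibres `I_s = φ⁻¹ {s}` are segments cutting `g` into finitely
many pieces, and for `b ∈ I_s` the condition `a + b < m` depends only on `a` (namely `a ∈ s`),
so `(f * g)|_{< m} = ∑ₛ f|_{lowerClosure s} * g|_{I_s}`. -/

/-- The `S`-fragment `f|S` of a Hahn series. -/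
noncomputable def HahnSeries.restrictSet {Γ K : Type*} [PartialOrder Γ] [Zero K]
    (f : HahnSeries Γ K) (S : Set Γ) : HahnSeries Γ K :=
  ⟨S.indicator f.coeff, f.isPWO_support'.mono (by
    rw [Set.support_indicator]; exact Set.inter_subset_right)⟩

open Finset in
theorem Finset.exists_fin_sum_mul_eq {ι A : Type*} [Mul A] [AddCommMonoid A] {P Q : Set A}
    (V : Finset ι) (u v : ι → A) (hu : ∀ i ∈ V, u i ∈ P) (hv : ∀ i ∈ V, v i ∈ Q) :
    ∃ (n : ℕ) (u' v' : Fin n → A), (∀ i, u' i ∈ P) ∧ (∀ i, v' i ∈ Q) ∧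
      ∑ i ∈ V, u i * v i = ∑ i, u' i * v' i :=
  ⟨#V, fun i => u (V.equivFin.symm i), fun i => v (V.equivFin.symm i),
    fun i => hu _ (V.equivFin.symm i).2, fun i => hv _ (V.equivFin.symm i).2, by
      rw [← sum_coe_sort V]
      exact Fintype.sum_equiv V.equivFin _ _ fun i => by simp⟩

theorem antitone_setOf_add_lt {Γ : Type*} [AddCommMonoid Γ] [PartialOrder Γ]
    [IsOrderedAddMonoid Γ] (A : Set Γ) (m : Γ) :
    Antitone fun b => {a ∈ A | a + b < m} :=
  fun _ _ hb a ha => ⟨ha.1, (add_le_add_right hb a).trans_lt ha.2⟩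

theorem Set.IsWF.finite_image_setOf_add_lt {Γ : Type*} [AddCommMonoid Γ] [LinearOrder Γ]
    [IsOrderedCancelAddMonoid Γ] {A B : Set Γ} (hA : A.IsWF) (hB : B.IsPWO) (m : Γ) :
    ((fun b => {a ∈ A | a + b < m}) '' B).Finite := by
  set φ : Γ → Set Γ := fun b => {a ∈ A | a + b < m}
  have hφ : Antitone φ := antitone_setOf_add_lt A m
  by_contra hinf
  set e := Set.Infinite.natEmbedding _ hinf
  choose b hbB hb using fun n => (e n).2
  have hinj : Function.Injective (φ ∘ b) := fun i j h =>
    e.injective (Subtype.ext ((hb i).symm.trans (h.trans (hb j))))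
  obtain ⟨σ, hσ⟩ := hB.exists_monotone_subseq hbB
  have hbσ : StrictMono (b ∘ σ) := hσ.strictMono_of_injective (hinj.of_comp.comp σ.injective)
  have hdrop : ∀ n, ∃ a ∈ φ (b (σ n)), a ∉ φ (b (σ (n + 1))) := fun n =>
    Set.not_subset.1 fun hsub => σ.injective.ne n.succ_ne_self.symm <| hinj <|
      hsub.antisymm (hφ (hbσ n.lt_succ_self).le)
  choose a ha ha' using hdrop
  refine Set.isWF_iff_no_descending_seq.1 hA a (strictAnti_nat_of_succ_lt fun n => ?_)
    fun n => (ha n).1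
  have hlt : a (n + 1) + b (σ (n + 1)) < m := (ha (n + 1)).2
  have hge : m ≤ a n + b (σ (n + 1)) := not_lt.1 fun h => ha' n ⟨(ha n).1, h⟩
  exact lt_of_add_lt_add_right (hlt.trans_le hge)

namespace HahnSeries

section Restrict

variable {Γ R : Type*} [PartialOrder Γ]

@[simp]
theorem coeff_restrictSet [Zero R] (f : HahnSeries Γ R) (S : Set Γ) :
    (f.restrictSet S).coeff = S.indicator f.coeff := rfl

theorem support_restrictSet [Zero R] (f : HahnSeries Γ R) (S : Set Γ) :
    (f.restrictSet S).support = S ∩ f.support :=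
  Set.support_indicator

theorem restrictSet_eq_self [Zero R] {f : HahnSeries Γ R} {S : Set Γ} (h : f.support ⊆ S) :
    f.restrictSet S = f :=
  HahnSeries.ext (Set.indicator_eq_self.2 h)

theorem restrictSet_eq_zero [Zero R] {f : HahnSeries Γ R} {S : Set Γ}
    (h : Disjoint f.support S) : f.restrictSet S = 0 :=
  HahnSeries.ext (Set.indicator_eq_zero'.2 h)

theorem restrictSet_add [AddMonoid R] (f g : HahnSeries Γ R) (S : Set Γ) :
    (f + g).restrictSet S = f.restrictSet S + g.restrictSet S :=
  HahnSeries.ext (Set.indicator_add' S f.coeff g.coeff)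

theorem restrictSet_add_restrictSet_compl [AddMonoid R] (f : HahnSeries Γ R) (S : Set Γ) :
    f.restrictSet S + f.restrictSet Sᶜ = f :=
  HahnSeries.ext (Set.indicator_self_add_compl S f.coeff)

theorem restrictSet_sum [AddCommMonoid R] {ι : Type*} (V : Finset ι) (f : ι → HahnSeries Γ R)
    (S : Set Γ) : (∑ i ∈ V, f i).restrictSet S = ∑ i ∈ V, (f i).restrictSet S := by
  classical
  ext c
  simp only [coeff_sum, coeff_restrictSet, Set.indicator_apply]
  split_ifs <;> simp

theorem sum_restrictSet_preimage_singleton [AddCommMonoid R] {ι : Type*}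
    (f : HahnSeries Γ R) (φ : Γ → ι) (V : Finset ι) (hV : ∀ b ∈ f.support, φ b ∈ V) :
    ∑ i ∈ V, f.restrictSet (φ ⁻¹' {i}) = f := by
  classical
  ext c
  simp only [coeff_sum, coeff_restrictSet, Set.indicator_apply, Set.mem_preimage,
    Set.mem_singleton_iff, Finset.sum_ite_eq]
  split_ifs with hc
  · rfl
  · exact (not_not.1 (mt (hV c) hc)).symm

end Restrict

theorem restrictSet_mul_of_forall_add_mem_iff {Γ R : Type*} [AddCommMonoid Γ] [PartialOrder Γ]
    [IsOrderedCancelAddMonoid Γ] [NonUnitalNonAssocSemiring R] {f g : HahnSeries Γ R}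
    {S T : Set Γ} (h : ∀ a ∈ f.support, ∀ b ∈ g.support, a + b ∈ T ↔ a ∈ S) :
    (f * g).restrictSet T = f.restrictSet S * g := by
  have hS : (f.restrictSet S * g).support ⊆ T := by
    rintro _ hc
    obtain ⟨a, ha, b, hb, rfl⟩ := support_mul_subset hc
    obtain ⟨haS, haf⟩ := support_restrictSet f _ ▸ ha
    exact (h a haf b hb).2 haS
  have hSc : Disjoint (f.restrictSet Sᶜ * g).support T := by
    refine Set.disjoint_left.2 fun _ hc hcT => ?_
    obtain ⟨a, ha, b, hb, rfl⟩ := support_mul_subset hc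
    obtain ⟨haS, haf⟩ := support_restrictSet f _ ▸ ha
    exact haS ((h a haf b hb).1 hcT)
  conv_lhs => rw [← restrictSet_add_restrictSet_compl f S]
  rw [add_mul, restrictSet_add, restrictSet_eq_self hS, restrictSet_eq_zero hSc, add_zero]

theorem exists_fin_sum_mul_eq_restrictSet_Iio_mul {Γ R : Type*} [AddCommMonoid Γ]
    [LinearOrder Γ] [IsOrderedCancelAddMonoid Γ] [Semiring R] {X Y : Set (HahnSeries Γ R)}
    (hX : ∀ f ∈ X, ∀ S : Set Γ, S.OrdConnected → f.restrictSet S ∈ X)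
    (hY : ∀ g ∈ Y, ∀ S : Set Γ, S.OrdConnected → g.restrictSet S ∈ Y)
    {f g : HahnSeries Γ R} (hf : f ∈ X) (hg : g ∈ Y) (m : Γ) :
    ∃ (n : ℕ) (u v : Fin n → HahnSeries Γ R), (∀ i, u i ∈ X) ∧ (∀ i, v i ∈ Y) ∧
      (f * g).restrictSet (Set.Iio m) = ∑ i, u i * v i := by
  set φ : Γ → Set Γ := fun b => {a ∈ f.support | a + b < m}
  set V := (f.isWF_support.finite_image_setOf_add_lt g.isPWO_support m).toFinset
  have hsplit : (f * g).restrictSet (Set.Iio m) =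
      ∑ s ∈ V, f.restrictSet (lowerClosure s) * g.restrictSet (φ ⁻¹' {s}) := by
    conv_lhs => rw [← sum_restrictSet_preimage_singleton g φ V fun b hb =>
      (Set.Finite.mem_toFinset _).2 (Set.mem_image_of_mem φ hb)]
    rw [Finset.mul_sum, restrictSet_sum]
    refine Finset.sum_congr rfl fun s _ => restrictSet_mul_of_forall_add_mem_iff fun a ha b hb => ?_
    obtain ⟨rfl, -⟩ := support_restrictSet g _ ▸ hb
    exact ⟨fun hab => subset_lowerClosure ⟨ha, hab⟩,
      fun ⟨a', ⟨_, ha'⟩, hle⟩ => (add_le_add_left hle b).trans_lt ha'⟩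
  rw [hsplit]
  exact V.exists_fin_sum_mul_eq _ _ (fun s _ => hX f hf _ (lowerClosure s).lower.ordConnected)
    fun s _ => hY g hg _ (Set.ordConnected_singleton.preimage_anti (antitone_setOf_add_lt _ m))

end HahnSeries

/-- Let `𝕂` be a field, `Γ` a linearly ordered Abelian group (an additive copy of the
multiplicative group `𝔐` of monomials; supports are reverse well ordered, encoded via
the order dual) and `X`, `Y` two `𝕂`-subspaces of the Hahn field `𝕂⟪𝔐⟫`, each closed
under segments.  Then every truncation `(f·g)|𝔪` of a product, `f ∈ X`, `g ∈ Y`, is a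
finite sum `Σ_{i<n} fᵢ·gᵢ` with `fᵢ ∈ X`, `gᵢ ∈ Y`. -/
theorem truncation_of_product_of_segmentClosed_subspaces
    {Γ K : Type*} [AddCommGroup Γ] [LinearOrder Γ] [IsOrderedAddMonoid Γ] [Field K]
    (X Y : Submodule K (HahnSeries Γᵒᵈ K))
    (hX : ∀ f ∈ X, ∀ S : Set Γ, S.OrdConnected →
      f.restrictSet (OrderDual.ofDual ⁻¹' S) ∈ X)
    (hY : ∀ g ∈ Y, ∀ S : Set Γ, S.OrdConnected →
      g.restrictSet (OrderDual.ofDual ⁻¹' S) ∈ Y) :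
    ∀ f ∈ X, ∀ g ∈ Y, ∀ m : Γ,
      ∃ (n : ℕ) (u v : Fin n → HahnSeries Γᵒᵈ K),
        (∀ i, u i ∈ X) ∧ (∀ i, v i ∈ Y) ∧
        (f * g).restrictSet (OrderDual.ofDual ⁻¹' {b | m < b}) = ∑ i, u i * v i :=
  fun _ hf _ hg m => HahnSeries.exists_fin_sum_mul_eq_restrictSet_Iio_mul
    (fun f hf _ hS => hX f hf _ (Set.ordConnected_dual.1 hS))
    (fun g hg _ hS => hY g hg _ (Set.ordConnected_dual.1 hS)) hf hg (OrderDual.toDual m)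
end

section
/- Let ℱ be a truncation-closed family of generalized power series (over an ordered field 𝕂 with exponents in an ordered field Λ) that is closed under the renormalized derivative operations f(x₀,…,x_{n−1}) ↦ x_i ∂_{x_i} f. Then the algebra of generalized power series generated by ℱ (closure under 𝕂-algebra operations and variable reindexings) is almost fine; in particular it is truncation-closed. -/
/-!
The generated algebra is the smallest reindex-closed family of subalgebras containing `ℱ`, so
it suffices to check that the series lying in some submodule of it that is closed under partial
truncations and the derivations `x_i ∂_{x_i}` again form such a family. For derivatives this is
the Leibniz rule and the chain rule for reindexings. For truncations, the product `f g` is the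
push-forward of `f(x) g(y)` along addition of exponents and a reindexing is the push-forward along
`σ_*`, so truncating either amounts to restricting a series to a lower set `D` of exponents. On a
well-partially-ordered support the complement of `D` is generated by its finitely many minimal
elements `m`, so restricting to `D` is a composition of maps `f ↦ f - f|_{m ≤ γ}`, and `f|_{m ≤ γ}`
is in turn a composition of maps `f ↦ f - ptrunc j (m j) f`.
-/

open Classical

section

variable {Λ K : Type*} [Field Λ] [LinearOrder Λ] [IsStrictOrderedRing Λ]
  [Field K] [LinearOrder K] [IsStrictOrderedRing K]

/-- Generalized power series in `n` variables, coefficients in `𝕂`, exponents in `Λ`. -/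
abbrev GSer (Λ K : Type*) [Field Λ] [LinearOrder Λ] [IsStrictOrderedRing Λ]
    [Field K] [LinearOrder K] [IsStrictOrderedRing K] (n : ℕ) :=
  HahnSeries (Fin n → Λ) K

/-- Partial truncation: keep the monomials `x^γ` with `γ i < α`. -/
noncomputable def ptrunc {n : ℕ} (i : Fin n) (α : Λ) (f : GSer Λ K n) : GSer Λ K n :=
  f.restrictSet {γ | γ i < α}

/-- The coordinate projection `x_i` as a generalized power series. -/
noncomputable def gproj {n : ℕ} (i : Fin n) : GSer Λ K n :=
  HahnSeries.single (Pi.single i (1 : Λ)) (1 : K)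

/-- The renormalized derivative `x_i ∂_{x_i} f`. -/
noncomputable def rder (ι : Λ →+* K) {n : ℕ} (i : Fin n) (f : GSer Λ K n) :
    GSer Λ K n :=
  ⟨fun γ => ι (γ i) * f.coeff γ, f.isPWO_support'.mono (fun γ hγ => by
    simp only [Function.mem_support] at hγ ⊢
    exact fun h => hγ (by rw [h, mul_zero]))⟩

/-- `h` is the reindexing `σ(f)` of `f` along `σ : x → y` (possibly identifying
variables): the coefficient of `y^γ` in `σ(f)` is the sum of the coefficients of the
`x^δ` with pushforward `σ_*(δ) = γ`. -/
noncomputable def IsReindex {k n : ℕ} (σ : Fin k → Fin n) (f : GSer Λ K k)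
    (h : GSer Λ K n) : Prop :=
  ∀ γ : Fin n → Λ,
    h.coeff γ = ∑ᶠ δ : Fin k → Λ,
      if (fun j => ∑ i ∈ Finset.univ.filter (fun i => σ i = j), δ i) = γ then
        f.coeff δ
      else 0

/-- A family all of whose members are `𝕂`-subalgebras. -/
def IsSubalgFam (G : ∀ n : ℕ, Set (GSer Λ K n)) : Prop :=
  ∀ n, ∃ A : Subalgebra K (GSer Λ K n), (A : Set (GSer Λ K n)) = G n

/-- Closure under variable reindexings. -/
def ReindexClosed (G : ∀ n : ℕ, Set (GSer Λ K n)) : Prop :=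
  ∀ (k n : ℕ) (σ : Fin k → Fin n), ∀ f ∈ G k,
    ∀ h : GSer Λ K n, IsReindex σ f h → h ∈ G n

/-- The algebra of generalized power series generated by the family `ℱ`: the smallest
family of `𝕂`-subalgebras containing `ℱ` and closed under variable reindexings. -/
def GenAlg (F : ∀ n : ℕ, Set (GSer Λ K n)) (n : ℕ) : Set (GSer Λ K n) :=
  {f | ∀ G : ∀ n : ℕ, Set (GSer Λ K n),
    IsSubalgFam G → ReindexClosed G → (∀ m, F m ⊆ G m) → f ∈ G n}

theorem Module.End.span_mem_invtSubmodule {R V : Type*} [Semiring R] [AddCommMonoid V]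
    [Module R V] {T : Module.End R V} {S : Set V} (h : ∀ v ∈ S, T v ∈ Submodule.span R S) :
    Submodule.span R S ∈ T.invtSubmodule :=
  (Module.End.mem_invtSubmodule T).2 (Submodule.span_le.2 h)

namespace HahnSeries

section Restrict

variable {Γ R : Type*} [PartialOrder Γ]

@[simp] theorem restrictSet_coeff [Zero R] (f : HahnSeries Γ R) (S : Set Γ) (γ : Γ) :
    (f.restrictSet S).coeff γ = S.indicator f.coeff γ := rfl

theorem restrictSet_restrictSet [Zero R] (f : HahnSeries Γ R) (S T : Set Γ) :
    (f.restrictSet T).restrictSet S = f.restrictSet (S ∩ T) := by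
  ext γ
  exact congrFun (Set.indicator_indicator S T f.coeff) γ

theorem restrictSet_congr [Zero R] {f : HahnSeries Γ R} {S T : Set Γ}
    (h : ∀ γ ∈ f.support, γ ∈ S ↔ γ ∈ T) : f.restrictSet S = f.restrictSet T := by
  ext γ
  by_cases hγ : γ ∈ f.support
  · simp [Set.indicator, h γ hγ]
  · have hf : f.coeff γ = 0 := by simpa using hγ
    simp [Set.indicator, hf]

variable (R) in
noncomputable def restrictₗ [Semiring R] (S : Set Γ) : Module.End R (HahnSeries Γ R) where
  toFun f := f.restrictSet S
  map_add' f g := by ext γ; simp [Set.indicator_add']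
  map_smul' c f := by ext γ; simp [Set.indicator_apply]

@[simp] theorem restrictₗ_apply [Semiring R] (S : Set Γ) (f : HahnSeries Γ R) :
    restrictₗ R S f = f.restrictSet S := rfl

variable [Ring R] {M : Submodule R (HahnSeries Γ R)}

open Module.End

theorem mem_invtSubmodule_restrictₗ_compl {S : Set Γ}
    (hM : M ∈ (restrictₗ R S).invtSubmodule) : M ∈ (restrictₗ R Sᶜ).invtSubmodule := by
  intro f hf
  have hcompl : f.restrictSet Sᶜ = f - f.restrictSet S := by
    ext γ
    simp [Set.indicator_compl]
  simpa [hcompl] using M.sub_mem hf (hM hf)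

theorem mem_invtSubmodule_restrictₗ_biInter {β : Type*} (s : Finset β) {S : β → Set Γ}
    (hM : ∀ i ∈ s, M ∈ (restrictₗ R (S i)).invtSubmodule) :
    M ∈ (restrictₗ R (⋂ i ∈ s, S i)).invtSubmodule := by
  classical
  induction s using Finset.induction_on with
  | empty =>
    intro f hf
    show f.restrictSet _ ∈ M
    convert hf using 1
    ext γ
    simp
  | insert i s hi ih =>
    intro f hf
    rw [Finset.set_biInter_insert]
    simp only [Submodule.mem_comap, restrictₗ_apply, ← restrictSet_restrictSet]
    exact hM i (Finset.mem_insert_self i s)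
      (ih (fun j hj => hM j (Finset.mem_insert_of_mem hj)) hf)

theorem mem_invtSubmodule_restrictₗ_of_isLowerSet
    (hM : ∀ m : Γ, M ∈ (restrictₗ R (Set.Ici m)).invtSubmodule) {D : Set Γ}
    (hD : IsLowerSet D) : M ∈ (restrictₗ R D).invtSubmodule := by
  intro f hf
  have hU : (f.support \ D).IsPWO := f.isPWO_support.mono Set.sdiff_subset
  have hT : {m | Minimal (· ∈ f.support \ D) m}.Finite :=
    (setOfPred_minimal_antichain _).finite_of_partiallyWellOrderedOn
      (hU.mono fun m hm => hm.1)
  have hDT : f.restrictSet D = f.restrictSet (⋂ m ∈ hT.toFinset, (Set.Ici m)ᶜ) := by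
    refine restrictSet_congr fun γ hγ => ?_
    simp only [Set.mem_iInter, Set.Finite.mem_toFinset, Set.mem_compl_iff, Set.mem_Ici]
    refine ⟨fun hγD m hm hmγ => hm.1.2 (hD hmγ hγD), fun h => ?_⟩
    by_contra hγD
    obtain ⟨m, hmγ, hm⟩ := hU.exists_le_minimal ⟨hγ, hγD⟩
    exact h m hm hmγ
  show f.restrictSet D ∈ M
  rw [hDT]
  exact mem_invtSubmodule_restrictₗ_biInter _
    (fun m _ => mem_invtSubmodule_restrictₗ_compl (hM m)) hf

end Restrict

section Tensor

variable {Γ Γ' R : Type*} [PartialOrder Γ] [PartialOrder Γ'] [Semiring R]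

/-- The series `f(x) g(y)` in the disjoint union of the variables of `f` and `g`. -/
def tensor (f : HahnSeries Γ R) (g : HahnSeries Γ' R) : HahnSeries (Γ × Γ') R where
  coeff p := f.coeff p.1 * g.coeff p.2
  isPWO_support' := (f.isPWO_support.prod g.isPWO_support).mono fun _ hp =>
    ⟨left_ne_zero_of_mul hp, right_ne_zero_of_mul hp⟩

@[simp] theorem tensor_coeff (f : HahnSeries Γ R) (g : HahnSeries Γ' R) (p : Γ × Γ') :
    (f.tensor g).coeff p = f.coeff p.1 * g.coeff p.2 := rfl

theorem restrictSet_tensor (f : HahnSeries Γ R) (g : HahnSeries Γ' R) (S : Set Γ)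
    (T : Set Γ') :
    (f.tensor g).restrictSet (S ×ˢ T) = (f.restrictSet S).tensor (g.restrictSet T) := by
  ext p
  by_cases hS : p.1 ∈ S <;> by_cases hT : p.2 ∈ T <;> simp [hS, hT]

open Module.End Submodule in
theorem span_image2_tensor_mem_invtSubmodule {M : Submodule R (HahnSeries Γ R)}
    {N : Submodule R (HahnSeries Γ' R)} {S : Set Γ} {T : Set Γ'}
    (hM : M ∈ (restrictₗ R S).invtSubmodule) (hN : N ∈ (restrictₗ R T).invtSubmodule) :
    span R (Set.image2 tensor M N) ∈ (restrictₗ R (S ×ˢ T)).invtSubmodule := by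
  rw [mem_invtSubmodule_iff_map_le, map_span, span_le]
  rintro _ ⟨_, ⟨a, ha, b, hb, rfl⟩, rfl⟩
  exact subset_span ⟨_, hM ha, _, hN hb, (restrictSet_tensor a b S T).symm⟩

end Tensor

section MapDomain

variable {Γ Γ' R : Type*} [PartialOrder Γ] [PartialOrder Γ'] [Semiring R] {φ : Γ → Γ'}

theorem hasFiniteSupport_fiber (hφ : StrictMono φ) (f : HahnSeries Γ R) (γ' : Γ') :
    Function.HasFiniteSupport fun γ => if φ γ = γ' then f.coeff γ else 0 := by
  have hanti : IsAntichain (· ≤ ·) {γ ∈ f.support | φ γ = γ'} := fun a ha b hb hab hle =>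
    (hφ (lt_of_le_of_ne hle hab)).ne (ha.2.trans hb.2.symm)
  refine (hanti.finite_of_partiallyWellOrderedOn
    (f.isPWO_support.mono fun γ hγ => hγ.1)).subset fun γ hγ => ?_
  by_cases h : φ γ = γ'
  · exact ⟨by simpa [h] using hγ, h⟩
  · simp [h] at hγ

variable (φ) in
/-- Strict monotonicity makes each fibre of `φ` meet the support in a finite antichain, so the
`finsum` below is a genuine finite sum (see `hasFiniteSupport_fiber`). -/
noncomputable def mapDomain (hφ : StrictMono φ) : HahnSeries Γ R →ₗ[R] HahnSeries Γ' R where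
  toFun f :=
    { coeff := fun γ' => ∑ᶠ γ, if φ γ = γ' then f.coeff γ else 0
      isPWO_support' := (f.isPWO_support.image_of_monotone hφ.monotone).mono fun γ' hγ' => by
        by_contra hnot
        refine hγ' (finsum_eq_zero_of_forall_eq_zero fun γ => ?_)
        split_ifs with h
        · by_contra hγ
          exact hnot ⟨γ, hγ, h⟩
        · rfl }
  map_add' f g := by
    ext γ'
    simp only [coeff_add]
    rw [← finsum_add_distrib (hasFiniteSupport_fiber hφ f γ')
      (hasFiniteSupport_fiber hφ g γ')]
    exact finsum_congr fun γ => by split_ifs <;> simp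
  map_smul' c f := by
    ext γ'
    simp only [coeff_smul, RingHom.id_apply, smul_eq_mul]
    rw [← smul_eq_mul, smul_finsum' c (hasFiniteSupport_fiber hφ f γ')]
    exact finsum_congr fun γ => by split_ifs <;> simp

theorem mapDomain_coeff (hφ : StrictMono φ) (f : HahnSeries Γ R) (γ' : Γ') :
    (mapDomain φ hφ f).coeff γ' = ∑ᶠ γ, if φ γ = γ' then f.coeff γ else 0 := rfl

theorem restrictSet_mapDomain (hφ : StrictMono φ) (f : HahnSeries Γ R) (S : Set Γ') :
    (mapDomain φ hφ f).restrictSet S = mapDomain φ hφ (f.restrictSet (φ ⁻¹' S)) := by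
  ext γ'
  simp only [restrictSet_coeff, mapDomain_coeff, Set.indicator_apply, Set.mem_preimage]
  by_cases hS : γ' ∈ S
  · simp only [hS, if_true]
    exact finsum_congr fun γ => by split_ifs <;> simp_all
  · simp only [hS, if_false]
    exact (finsum_eq_zero_of_forall_eq_zero fun γ => by split_ifs <;> simp_all).symm

theorem strictMono_fst_add_snd [AddCommMonoid Γ] [IsOrderedCancelAddMonoid Γ] :
    StrictMono fun p : Γ × Γ => p.1 + p.2 := by
  rintro ⟨a, b⟩ ⟨c, d⟩ h
  rcases Prod.lt_iff.1 h with ⟨h₁, h₂⟩ | ⟨h₁, h₂⟩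
  · exact add_lt_add_of_lt_of_le h₁ h₂
  · exact add_lt_add_of_le_of_lt h₁ h₂

theorem mul_eq_mapDomain_tensor [AddCommMonoid Γ] [IsOrderedCancelAddMonoid Γ]
    (f g : HahnSeries Γ R) :
    f * g = mapDomain _ strictMono_fst_add_snd (f.tensor g) := by
  ext γ
  rw [coeff_mul, mapDomain_coeff, finsum_eq_sum_of_support_subset _ (s := Finset.antidiagonal
    f.isPWO_support g.isPWO_support γ) fun p hp => ?_]
  · exact Finset.sum_congr rfl fun p hp => by
      rw [if_pos (Finset.mem_antidiagonal.1 hp).2.2]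
      rfl
  · by_cases h : p.1 + p.2 = γ
    · simp only [h, if_true, Function.mem_support, tensor_coeff] at hp
      exact Finset.mem_antidiagonal.2 ⟨left_ne_zero_of_mul hp, right_ne_zero_of_mul hp, h⟩
    · simp [h] at hp

end MapDomain

open Submodule in
theorem mapDomain_span_image2_tensor_le {Γ R : Type*} [AddCommMonoid Γ] [PartialOrder Γ]
    [IsOrderedCancelAddMonoid Γ] [CommSemiring R] (M N : Submodule R (HahnSeries Γ R)) :
    (span R (Set.image2 tensor M N)).map (mapDomain _ strictMono_fst_add_snd) ≤ M * N := by
  rw [map_span, span_le]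
  rintro _ ⟨_, ⟨a, ha, b, hb, rfl⟩, rfl⟩
  rw [SetLike.mem_coe, ← mul_eq_mapDomain_tensor]
  exact mul_mem_mul ha hb

end HahnSeries

section Reindex

variable {W : Type*} [AddCommMonoid W] [PartialOrder W] [IsOrderedCancelAddMonoid W] {k n : ℕ}

/-- The map `δ ↦ σ_*(δ)` on exponents from `IsReindex`. -/
def pushExp (σ : Fin k → Fin n) (δ : Fin k → W) : Fin n → W :=
  fun j => ∑ i ∈ Finset.univ.filter (fun i => σ i = j), δ i

theorem strictMono_pushExp (σ : Fin k → Fin n) : StrictMono (pushExp (W := W) σ) := by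
  intro δ δ' h
  obtain ⟨hle, i, hi⟩ := Pi.lt_def.1 h
  have hmono : pushExp σ δ ≤ pushExp σ δ' := fun j => Finset.sum_le_sum fun i _ => hle i
  refine lt_of_le_of_ne hmono fun heq => ?_
  have hlt : pushExp σ δ (σ i) < pushExp σ δ' (σ i) :=
    Finset.sum_lt_sum (fun j _ => hle j) ⟨i, by simp, hi⟩
  exact hlt.ne (congrFun heq _)

end Reindex

section Derivative

variable (ι : Λ →+* K) {n : ℕ}

@[simp] theorem rder_coeff (i : Fin n) (f : GSer Λ K n) (γ : Fin n → Λ) :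
    (rder ι i f).coeff γ = ι (γ i) * f.coeff γ := rfl

noncomputable def rderₗ (i : Fin n) : Module.End K (GSer Λ K n) where
  toFun := rder ι i
  map_add' f g := by ext γ; simp [mul_add]
  map_smul' c f := by ext γ; simp [mul_left_comm]

@[simp] theorem rderₗ_apply (i : Fin n) (f : GSer Λ K n) : rderₗ ι i f = rder ι i f := rfl

theorem rder_support_subset (i : Fin n) (f : GSer Λ K n) : (rder ι i f).support ⊆ f.support :=
  fun _ hγ => right_ne_zero_of_mul hγ

theorem rder_one (i : Fin n) : rder ι i (1 : GSer Λ K n) = 0 := by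
  ext γ
  by_cases hγ : γ = 0 <;> simp [HahnSeries.coeff_one, hγ]

theorem rder_mul (i : Fin n) (f g : GSer Λ K n) :
    rder ι i (f * g) = rder ι i f * g + f * rder ι i g := by
  ext γ
  rw [HahnSeries.coeff_add, rder_coeff,
    HahnSeries.coeff_mul_left' f.isPWO_support (rder_support_subset ι i f),
    HahnSeries.coeff_mul_right' g.isPWO_support (rder_support_subset ι i g),
    HahnSeries.coeff_mul, Finset.mul_sum, ← Finset.sum_add_distrib]
  refine Finset.sum_congr rfl fun p hp => ?_
  rw [← (Finset.mem_antidiagonal.1 hp).2.2]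
  simp only [rder_coeff, Pi.add_apply, map_add]
  ring

theorem rder_mapDomain_pushExp {k : ℕ} (σ : Fin k → Fin n) (f : GSer Λ K k) (i : Fin n) :
    rder ι i (HahnSeries.mapDomain (pushExp σ) (strictMono_pushExp σ) f) =
      HahnSeries.mapDomain (pushExp σ) (strictMono_pushExp σ)
        (∑ j ∈ Finset.univ.filter (fun j => σ j = i), rder ι j f) := by
  ext γ
  rw [rder_coeff, HahnSeries.mapDomain_coeff, HahnSeries.mapDomain_coeff, mul_finsum]
  refine finsum_congr fun δ => ?_
  split_ifs with h
  · subst h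
    simp [pushExp, Finset.sum_mul]
  · rw [mul_zero]

end Derivative

theorem isReindex_iff_eq_mapDomain {k n : ℕ} {σ : Fin k → Fin n} {f : GSer Λ K k}
    {h : GSer Λ K n} :
    IsReindex σ f h ↔ h = HahnSeries.mapDomain (pushExp σ) (strictMono_pushExp σ) f := by
  have hcoeff : ∀ γ, (HahnSeries.mapDomain (pushExp σ) (strictMono_pushExp σ) f).coeff γ =
      ∑ᶠ δ : Fin k → Λ,
        if (fun j => ∑ i ∈ Finset.univ.filter (fun i => σ i = j), δ i) = γ then f.coeff δ
        else 0 := by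
    intro γ
    rw [HahnSeries.mapDomain_coeff]
    congr with δ
    by_cases hδ : pushExp σ δ = γ
    · rw [if_pos hδ]
      exact (if_pos hδ).symm
    · rw [if_neg hδ]
      exact (if_neg hδ).symm
  simp only [IsReindex, HahnSeries.ext_iff, funext_iff, hcoeff]

theorem ptrunc_one {n : ℕ} (i : Fin n) (α : Λ) :
    ptrunc i α (1 : GSer Λ K n) = if 0 < α then 1 else 0 := by
  ext γ
  by_cases hγ : γ = 0 <;> by_cases hα : (0 : Λ) < α <;>
    simp [ptrunc, HahnSeries.coeff_one, Set.indicator_apply, hγ, hα]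

open Module.End Submodule HahnSeries

structure TruncDerivClosed (ι : Λ →+* K) {n : ℕ} (M : Submodule K (GSer Λ K n)) : Prop where
  ptrunc_mem : ∀ (i : Fin n) (α : Λ),
    M ∈ (restrictₗ K {γ : Fin n → Λ | γ i < α}).invtSubmodule
  rder_mem : ∀ i : Fin n, M ∈ (rderₗ ι i).invtSubmodule

namespace TruncDerivClosed

variable {ι : Λ →+* K} {n : ℕ} {M N : Submodule K (GSer Λ K n)}

theorem restrictₗ_Ici_mem (hM : TruncDerivClosed ι M) (m : Fin n → Λ) :
    M ∈ (restrictₗ K (Set.Ici m)).invtSubmodule := by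
  have hIci : Set.Ici m = ⋂ j ∈ Finset.univ, {γ : Fin n → Λ | γ j < m j}ᶜ := by
    ext γ
    simp [Pi.le_def]
  rw [hIci]
  exact mem_invtSubmodule_restrictₗ_biInter _
    fun j _ => mem_invtSubmodule_restrictₗ_compl (hM.ptrunc_mem j (m j))

theorem restrictSet_mem (hM : TruncDerivClosed ι M) {D : Set (Fin n → Λ)} (hD : IsLowerSet D)
    {f : GSer Λ K n} (hf : f ∈ M) : f.restrictSet D ∈ M :=
  mem_invtSubmodule_restrictₗ_of_isLowerSet hM.restrictₗ_Ici_mem hD hf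

theorem sup (hM : TruncDerivClosed ι M) (hN : TruncDerivClosed ι N) :
    TruncDerivClosed ι (M ⊔ N) :=
  ⟨fun i α => invtSubmodule.sup_mem (hM.ptrunc_mem i α) (hN.ptrunc_mem i α),
    fun i => invtSubmodule.sup_mem (hM.rder_mem i) (hN.rder_mem i)⟩

theorem span_of_mem_span {S : Set (GSer Λ K n)}
    (htr : ∀ f ∈ S, ∀ i α, ptrunc i α f ∈ span K S)
    (hder : ∀ f ∈ S, ∀ i, rder ι i f ∈ span K S) : TruncDerivClosed ι (span K S) :=
  ⟨fun i α => span_mem_invtSubmodule fun f hf => htr f hf i α,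
    fun i => span_mem_invtSubmodule fun f hf => hder f hf i⟩

theorem span_one : TruncDerivClosed ι (span K {(1 : GSer Λ K n)}) := by
  refine span_of_mem_span (fun _ h1 i α => ?_) (fun _ h1 i => ?_) <;>
    rw [Set.mem_singleton_iff.1 h1]
  · rw [ptrunc_one]
    split_ifs
    exacts [subset_span rfl, zero_mem _]
  · rw [rder_one]
    exact zero_mem _

theorem mul (hM : TruncDerivClosed ι M) (hN : TruncDerivClosed ι N) :
    TruncDerivClosed ι (M * N) := by
  refine ⟨fun i α => mul_le.2 fun a ha b hb => ?_, fun i => mul_le.2 fun a ha b hb => ?_⟩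
  · have hT : span K (Set.image2 tensor (M : Set (GSer Λ K n)) N) ∈
        (restrictₗ K ((fun p : (Fin n → Λ) × (Fin n → Λ) => p.1 + p.2) ⁻¹'
          {γ | γ i < α})).invtSubmodule :=
      mem_invtSubmodule_restrictₗ_of_isLowerSet (fun ⟨m₁, m₂⟩ => by
          rw [← Set.Ici_prod_Ici]
          exact span_image2_tensor_mem_invtSubmodule (hM.restrictₗ_Ici_mem m₁)
            (hN.restrictₗ_Ici_mem m₂))
        (((isLowerSet_Iio α).preimage (Function.monotone_eval i)).preimage
          strictMono_fst_add_snd.monotone)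
    rw [mem_comap, restrictₗ_apply, mul_eq_mapDomain_tensor, restrictSet_mapDomain]
    exact mapDomain_span_image2_tensor_le M N
      (mem_map_of_mem (hT (subset_span (Set.mem_image2_of_mem ha hb))))
  · rw [mem_comap, rderₗ_apply, rder_mul]
    exact add_mem (mul_mem_mul (hM.rder_mem i ha) hb) (mul_mem_mul ha (hN.rder_mem i hb))

theorem map_mapDomain_pushExp {k : ℕ} {M : Submodule K (GSer Λ K k)} (hM : TruncDerivClosed ι M)
    (σ : Fin k → Fin n) :
    TruncDerivClosed ι (M.map (mapDomain (pushExp σ) (strictMono_pushExp σ))) := by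
  refine ⟨fun i α => ?_, fun i => ?_⟩ <;> rintro _ ⟨f, hf, rfl⟩
  · rw [mem_comap, restrictₗ_apply, restrictSet_mapDomain]
    exact mem_map_of_mem (hM.restrictSet_mem (((isLowerSet_Iio α).preimage
      (Function.monotone_eval i)).preimage (strictMono_pushExp σ).monotone) hf)
  · rw [mem_comap, rderₗ_apply, rder_mapDomain_pushExp]
    exact mem_map_of_mem (sum_mem fun j _ => hM.rder_mem j hf)

end TruncDerivClosed

section Family

theorem subset_genAlg (F : ∀ n : ℕ, Set (GSer Λ K n)) (n : ℕ) : F n ⊆ GenAlg F n :=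
  fun _ hf _ _ _ hFG => hFG n hf

theorem reindexClosed_genAlg (F : ∀ n : ℕ, Set (GSer Λ K n)) : ReindexClosed (GenAlg F) :=
  fun k n σ f hf h hh G hG hre hFG => hre k n σ f (hf G hG hre hFG) h hh

theorem isSubalgFam_genAlg (F : ∀ n : ℕ, Set (GSer Λ K n)) : IsSubalgFam (GenAlg F) := by
  intro n
  have hsub : ∀ G, IsSubalgFam G → ReindexClosed G → (∀ m, F m ⊆ G m) →
      ∃ B : Subalgebra K (GSer Λ K n), (B : Set (GSer Λ K n)) = G n ∧
        GenAlg F n ⊆ B := fun G hG hre hFG => by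
    obtain ⟨B, hB⟩ := hG n
    exact ⟨B, hB, fun f hf => by rw [hB]; exact hf G hG hre hFG⟩
  refine ⟨{ carrier := GenAlg F n
            mul_mem' := fun ha hb G hG hre hFG => ?_
            add_mem' := fun ha hb G hG hre hFG => ?_
            algebraMap_mem' := fun c G hG hre hFG => ?_ }, rfl⟩ <;>
  obtain ⟨B, hB, hFB⟩ := hsub G hG hre hFG <;> rw [← hB]
  exacts [B.mul_mem (hFB ha) (hFB hb), B.add_mem (hFB ha) (hFB hb), B.algebraMap_mem c]

variable (ι : Λ →+* K) {F A : ∀ n : ℕ, Set (GSer Λ K n)}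

def truncDerivCore (A : ∀ n : ℕ, Set (GSer Λ K n)) (n : ℕ) : Set (GSer Λ K n) :=
  {f | ∃ M : Submodule K (GSer Λ K n),
    TruncDerivClosed ι M ∧ (M : Set (GSer Λ K n)) ⊆ A n ∧ f ∈ M}

open Submodule in
theorem isSubalgFam_truncDerivCore (hA : IsSubalgFam A) : IsSubalgFam (truncDerivCore ι A) := by
  intro n
  obtain ⟨B, hB⟩ := hA n
  have hle : ∀ M : Submodule K (GSer Λ K n), (M : Set (GSer Λ K n)) ⊆ A n ↔
      M ≤ Subalgebra.toSubmodule B := fun M => by rw [← hB]; rfl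
  refine ⟨{ carrier := truncDerivCore ι A n
            mul_mem' := ?_
            add_mem' := ?_
            algebraMap_mem' := fun c => ⟨span K {1}, TruncDerivClosed.span_one, ?_, ?_⟩ }, rfl⟩
  · rintro a b ⟨M, hM, hMA, ha⟩ ⟨N, hN, hNA, hb⟩
    refine ⟨M * N, hM.mul hN, (hle _).2 (mul_le.2 fun x hx y hy => ?_), mul_mem_mul ha hb⟩
    exact B.mul_mem ((hle M).1 hMA hx) ((hle N).1 hNA hy)
  · rintro a b ⟨M, hM, hMA, ha⟩ ⟨N, hN, hNA, hb⟩
    exact ⟨M ⊔ N, hM.sup hN, (hle _).2 (sup_le ((hle M).1 hMA) ((hle N).1 hNA)),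
      add_mem (mem_sup_left ha) (mem_sup_right hb)⟩
  · exact (hle _).2 (span_le.2 (Set.singleton_subset_iff.2 B.one_mem))
  · rw [Algebra.algebraMap_eq_smul_one]
    exact smul_mem _ c (subset_span rfl)

theorem reindexClosed_truncDerivCore (hA : ReindexClosed A) :
    ReindexClosed (truncDerivCore ι A) := by
  rintro k n σ f ⟨M, hM, hMA, hf⟩ h hh
  rw [isReindex_iff_eq_mapDomain.1 hh]
  refine ⟨M.map _, hM.map_mapDomain_pushExp σ, ?_, Submodule.mem_map_of_mem hf⟩
  rintro _ ⟨g, hg, rfl⟩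
  exact hA k n σ g (hMA hg) _ (isReindex_iff_eq_mapDomain.2 rfl)

theorem subset_truncDerivCore (hA : IsSubalgFam A) (hFA : ∀ n, F n ⊆ A n)
    (htr : ∀ n, ∀ f ∈ F n, ∀ (i : Fin n) (α : Λ), ptrunc i α f ∈ F n)
    (hder : ∀ n, ∀ f ∈ F n, ∀ i : Fin n, rder ι i f ∈ F n) (n : ℕ) :
    F n ⊆ truncDerivCore ι A n := by
  obtain ⟨B, hB⟩ := hA n
  intro f hf
  refine ⟨Submodule.span K (F n), TruncDerivClosed.span_of_mem_span
    (fun g hg i α => Submodule.subset_span (htr n g hg i α))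
    (fun g hg i => Submodule.subset_span (hder n g hg i)), ?_, Submodule.subset_span hf⟩
  have hFB := hFA n
  rw [← hB] at hFB ⊢
  exact Submodule.span_le (p := Subalgebra.toSubmodule B).2 hFB

end Family

theorem genAlg_almost_fine_general (ι : Λ →+* K)
    (F : ∀ n : ℕ, Set (GSer Λ K n))
    (hproj : ∀ (n : ℕ) (i : Fin n), gproj i ∈ F n)
    (htr : ∀ (n : ℕ), ∀ f ∈ F n, ∀ (i : Fin n) (α : Λ), ptrunc i α f ∈ F n)
    (hder : ∀ (n : ℕ), ∀ f ∈ F n, ∀ i : Fin n, rder ι i f ∈ F n) :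
    IsSubalgFam (GenAlg F) ∧
    (∀ (n : ℕ), ∀ f ∈ GenAlg F n, ∀ (i : Fin n) (α : Λ),
      ptrunc i α f ∈ GenAlg F n) ∧
    (∀ (n : ℕ) (i : Fin n), gproj i ∈ GenAlg F n) ∧
    (∀ (n : ℕ), ∀ f ∈ GenAlg F n, ∀ i : Fin n, rder ι i f ∈ GenAlg F n) := by
  have hcore : ∀ n, GenAlg F n ⊆ truncDerivCore ι (GenAlg F) n := fun n f hf =>
    hf _ (isSubalgFam_truncDerivCore ι (isSubalgFam_genAlg F))
      (reindexClosed_truncDerivCore ι (reindexClosed_genAlg F))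
      (subset_truncDerivCore ι (isSubalgFam_genAlg F) (subset_genAlg F) htr hder)
  refine ⟨isSubalgFam_genAlg F, fun n f hf i α => ?_, fun n i => subset_genAlg F n (hproj n i),
    fun n f hf i => ?_⟩ <;> obtain ⟨M, hM, hMA, hfM⟩ := hcore n hf
  exacts [hMA (hM.ptrunc_mem i α hfM), hMA (hM.rder_mem i hfM)]

/-- If `ℱ` is a truncation-closed family of generalized power series containing the
coordinate projections and closed under the renormalized derivatives
`f ↦ x_i ∂_{x_i} f`, then the algebra generated by `ℱ` is almost fine: it is a family
of subalgebras closed under partial truncations, containing the coordinate projections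
and closed under renormalized derivatives; in particular it is truncation-closed. -/
theorem genAlg_almost_fine (ι : Λ →+* K) (hι : Monotone ι)
    (F : ∀ n : ℕ, Set (GSer Λ K n))
    (hproj : ∀ (n : ℕ) (i : Fin n), gproj i ∈ F n)
    (htr : ∀ (n : ℕ), ∀ f ∈ F n, ∀ (i : Fin n) (α : Λ), ptrunc i α f ∈ F n)
    (hder : ∀ (n : ℕ), ∀ f ∈ F n, ∀ i : Fin n, rder ι i f ∈ F n) :
    IsSubalgFam (GenAlg F) ∧
    (∀ (n : ℕ), ∀ f ∈ GenAlg F n, ∀ (i : Fin n) (α : Λ),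
      ptrunc i α f ∈ GenAlg F n) ∧
    (∀ (n : ℕ) (i : Fin n), gproj i ∈ GenAlg F n) ∧
    (∀ (n : ℕ), ∀ f ∈ GenAlg F n, ∀ i : Fin n, rder ι i f ∈ GenAlg F n) :=
  genAlg_almost_fine_general ι F hproj htr hder

end
end
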